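/- arXiv:1311.7349 — 6 statements merged into one kernel-verified Lean document; each statement's English description precedes it below -/
import Mathlib

section
/- Let V be a vector space over ℚ with a symmetric bilinear form B, let s ≥ 3, and let A₁, …, A_s be vectors in V, with indices read cyclically modulo s, such that B(A_i, A_{i+1}) ≠ 0 for every i and B(A_i, A_j) = 0 whenever j is congruent to none of i−1, i, i+1 modulo s. Then the vectors A₁, …, A_{s−2} are linearly independent over ℚ. -/
/-- If (A₁,…,A_s) is a cyclic toric family of length s ≥ 3 with respect to a
symmetric bilinear form B on a ℚ-vector space V (i.e. B(A_i, A_{i+1}) ≠ 0 for all i, indices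
mod s, and B(A_i, A_j) = 0 whenever j ≢ i−1, i, i+1 mod s), then A₁, …, A_{s−2} are linearly
independent over ℚ. -/
theorem stmt_0 (V : Type*) [AddCommGroup V] [Module ℚ V]
    (B : V →ₗ[ℚ] V →ₗ[ℚ] ℚ) (hsymm : ∀ x y : V, B x y = B y x)
    (s : ℕ) (hs : 3 ≤ s) (A : ZMod s → V)
    (hadj : ∀ i : ZMod s, B (A i) (A (i + 1)) ≠ 0)
    (horth : ∀ i j : ZMod s, j ≠ i - 1 → j ≠ i → j ≠ i + 1 → B (A i) (A j) = 0) :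
    LinearIndependent ℚ (fun k : Fin (s - 2) => A (((k : ℕ) : ZMod s) + 1)) := by
  haveI : NeZero s := ⟨by omega⟩
  have hcast : ∀ a b : ℕ, a < s → b < s → ((a : ZMod s) = (b : ZMod s)) → a = b := by
    intro a b ha hb h
    have := congrArg ZMod.val h
    rwa [ZMod.val_cast_of_lt ha, ZMod.val_cast_of_lt hb] at this
  rw [Fintype.linearIndependent_iff]
  intro g hg
  suffices h : ∀ n : ℕ, ∀ k : Fin (s - 2), (k : ℕ) < n → g k = 0 by
    intro k; exact h (k + 1) k (Nat.lt_succ_self _)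
  intro n
  induction n with
  | zero => intro k hk; omega
  | succ m ih =>
    intro k hk
    rcases Nat.lt_or_ge (k : ℕ) m with h | h
    · exact ih k h
    have hkm : (k : ℕ) = m := by omega
    have hm : m < s - 2 := hkm ▸ k.isLt
    have h2 := congrArg (B (A (m : ZMod s))) hg
    rw [map_sum, map_zero] at h2
    simp only [map_smul, smul_eq_mul] at h2
    rw [Finset.sum_eq_single k] at h2
    · have hB : B (A (m : ZMod s)) (A (((k : ℕ) : ZMod s) + 1)) ≠ 0 := by
        rw [hkm]; exact hadj (m : ZMod s)
      exact (mul_eq_zero.mp h2).resolve_right hB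
    · intro k' _ hk'
      rcases Nat.lt_or_ge (k' : ℕ) m with h' | h'
      · rw [ih k' h', zero_mul]
      have hne : (k' : ℕ) ≠ m := fun e => hk' (Fin.ext (e.trans hkm.symm))
      have hgt : m < (k' : ℕ) := lt_of_le_of_ne h' (Ne.symm hne)
      have hk's : (k' : ℕ) < s - 2 := k'.isLt
      rw [horth (m : ZMod s) (((k' : ℕ) : ZMod s) + 1), mul_zero]
      · intro e
        have he : (((k' : ℕ) + 2 : ℕ) : ZMod s) = (m : ZMod s) := by
          push_cast
          rw [eq_sub_iff_add_eq] at e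
          rw [← e]; ring
        have := hcast _ _ (by omega) (by omega) he
        omega
      · intro e
        have he : (((k' : ℕ) + 1 : ℕ) : ZMod s) = (m : ZMod s) := by
          push_cast; rw [e]
        have := hcast _ _ (by omega) (by omega) he
        omega
      · intro e
        have he : (((k' : ℕ) + 1 : ℕ) : ZMod s) = ((m + 1 : ℕ) : ZMod s) := by
          push_cast; rw [e]
        have := hcast _ _ (by omega) (by omega) he
        omega
    · intro hn; exact absurd (Finset.mem_univ k) hn
end

section
/- Let a, e, f be integers with e ≠ 0, f ≠ 0, a < 0 and a + e² + f² > 0. Then, as rational numbers, ((a + e²)/f)² < max(e², f²) or ((a + f²)/e)² < max(e², f²). -/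
/-- If a, e, f are integers with e, f ≠ 0, a < 0 and a + e² + f² > 0, then
((a + e²)/f)² < max(e², f²) or ((a + f²)/e)² < max(e², f²) as rational numbers. -/
theorem stmt_3 (a e f : ℤ) (he : e ≠ 0) (hf : f ≠ 0) (ha : a < 0)
    (hconv : 0 < a + e ^ 2 + f ^ 2) :
    (((a : ℚ) + (e : ℚ) ^ 2) / (f : ℚ)) ^ 2 < max ((e : ℚ) ^ 2) ((f : ℚ) ^ 2) ∨
    (((a : ℚ) + (f : ℚ) ^ 2) / (e : ℚ)) ^ 2 < max ((e : ℚ) ^ 2) ((f : ℚ) ^ 2) := by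
  have hEQ : ((e : ℚ)) ≠ 0 := Int.cast_ne_zero.mpr he
  have hFQ : ((f : ℚ)) ≠ 0 := Int.cast_ne_zero.mpr hf
  have he2 : (0:ℚ) < (e:ℚ)^2 := by positivity
  have hf2 : (0:ℚ) < (f:ℚ)^2 := by positivity
  have haQ : (a:ℚ) < 0 := by exact_mod_cast ha
  have hconvQ : (0:ℚ) < (a:ℚ) + (e:ℚ)^2 + (f:ℚ)^2 := by exact_mod_cast hconv
  rcases le_total ((e:ℚ)^2) ((f:ℚ)^2) with h | h
  · left
    rw [max_eq_right h, div_pow, div_lt_iff₀ hf2]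
    nlinarith [sq_nonneg ((a:ℚ) + (e:ℚ)^2)]
  · right
    rw [max_eq_left h, div_pow, div_lt_iff₀ he2]
    nlinarith [sq_nonneg ((a:ℚ) + (f:ℚ)^2)]
end

section
/- Let l₁, l₂, l₃ ∈ ℤ² be primitive vectors and set a₁ = det(l₂, l₃), a₂ = det(l₃, l₁), a₃ = det(l₁, l₂), where det(u, v) := u₁v₂ − u₂v₁. Assume a₁ > 0 and a₃ > 0. Then for every pair of distinct indices i, j ∈ {1, 2, 3} one has gcd(a_i, a_j) = gcd(a₁, gcd(a₂, a₃)). -/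
/-!
By Cramer's rule `a₁ l₁ + a₂ l₂ + a₃ l₃ = 0`. A common divisor of two of the `aᵢ` therefore
divides both coordinates of `aₖ lₖ` for the third index `k`, hence divides `aₖ` because `lₖ` is
primitive. So `gcd(aᵢ, aⱼ)` already divides all three determinants.
-/

/-- The determinant of two vectors in ℤ². -/
def det2 (u v : ℤ × ℤ) : ℤ := u.1 * v.2 - u.2 * v.1

/-- A vector of ℤ² is primitive if its coordinates are coprime. -/
def IsPrimitive (u : ℤ × ℤ) : Prop := Int.gcd u.1 u.2 = 1

theorem det2_smul_add_det2_smul_add_det2_smul (l₁ l₂ l₃ : ℤ × ℤ) :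
    det2 l₂ l₃ • l₁ + det2 l₃ l₁ • l₂ + det2 l₁ l₂ • l₃ = 0 := by
  ext <;> simp only [det2, Prod.fst_add, Prod.snd_add, Prod.smul_fst, Prod.smul_snd, smul_eq_mul,
    Prod.fst_zero, Prod.snd_zero] <;> ring

theorem IsPrimitive.dvd_of_dvd_mul {u : ℤ × ℤ} (hu : IsPrimitive u) {d b : ℤ}
    (h₁ : d ∣ b * u.1) (h₂ : d ∣ b * u.2) : d ∣ b := by
  have h := Int.dvd_coe_gcd h₁ h₂
  rwa [Int.gcd_mul_left, hu, mul_one, Int.dvd_natAbs] at h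

theorem IsPrimitive.dvd_det2_of_dvd_of_dvd {l₁ l₂ l₃ : ℤ × ℤ} (h₃ : IsPrimitive l₃) {d : ℤ}
    (h₂₃ : d ∣ det2 l₂ l₃) (h₃₁ : d ∣ det2 l₃ l₁) : d ∣ det2 l₁ l₂ := by
  have key (f : ℤ × ℤ →ₗ[ℤ] ℤ) : d ∣ det2 l₁ l₂ * f l₃ := by
    have hf := congrArg f (det2_smul_add_det2_smul_add_det2_smul l₁ l₂ l₃)
    simp only [map_add, map_smul, map_zero, smul_eq_mul] at hf
    rw [eq_neg_of_add_eq_zero_right hf]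
    exact (dvd_add (h₂₃.mul_right _) (h₃₁.mul_right _)).neg_right
  exact h₃.dvd_of_dvd_mul (key (LinearMap.fst ℤ ℤ ℤ)) (key (LinearMap.snd ℤ ℤ ℤ))

theorem Int.gcd_gcd_eq_gcd_of_dvd {x y z : ℤ} (h : ∀ d : ℤ, d ∣ x → d ∣ y → d ∣ z) :
    Int.gcd x (Int.gcd y z) = Int.gcd x y := by
  rw [← Int.gcd_assoc, Int.gcd_eq_natAbs_left (h _ (Int.gcd_dvd_left _ _) (Int.gcd_dvd_right _ _)),
    Int.natAbs_natCast]

theorem stmt_10_general (l₁ l₂ l₃ : ℤ × ℤ)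
    (h₁ : IsPrimitive l₁) (h₂ : IsPrimitive l₂) (h₃ : IsPrimitive l₃)
    (a : Fin 3 → ℤ)
    (ha : a = ![det2 l₂ l₃, det2 l₃ l₁, det2 l₁ l₂]) :
    ∀ i j : Fin 3, i ≠ j → Int.gcd (a i) (a j) = Int.gcd (a 0) (Int.gcd (a 1) (a 2)) := by
  have h₀₁ : Int.gcd (a 0) (a 1) = Int.gcd (a 0) (Int.gcd (a 1) (a 2)) := by
    subst ha; exact (Int.gcd_gcd_eq_gcd_of_dvd fun _ => h₃.dvd_det2_of_dvd_of_dvd).symm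
  have h₁₂ : Int.gcd (a 1) (a 2) = Int.gcd (a 0) (Int.gcd (a 1) (a 2)) := by
    rw [Int.gcd_left_comm, Int.gcd_comm (a 0)]
    subst ha; exact (Int.gcd_gcd_eq_gcd_of_dvd fun _ => h₁.dvd_det2_of_dvd_of_dvd).symm
  have h₂₀ : Int.gcd (a 2) (a 0) = Int.gcd (a 0) (Int.gcd (a 1) (a 2)) := by
    rw [← Int.gcd_assoc, Int.gcd_comm _ (a 2)]
    subst ha; exact (Int.gcd_gcd_eq_gcd_of_dvd fun _ => h₂.dvd_det2_of_dvd_of_dvd).symm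
  intro i j hij
  fin_cases i <;> fin_cases j <;> first
    | exact absurd rfl hij
    | assumption
    | exact (Int.gcd_comm _ _).trans ‹_›

/-- For primitive vectors l₁, l₂, l₃ ∈ ℤ² with a₁ = det(l₂,l₃) > 0,
a₂ = det(l₃,l₁), a₃ = det(l₁,l₂) > 0, one has gcd(a_i, a_j) = gcd(a₁, a₂, a₃) for all
distinct indices i, j. -/
theorem stmt_10 (l₁ l₂ l₃ : ℤ × ℤ)
    (h₁ : IsPrimitive l₁) (h₂ : IsPrimitive l₂) (h₃ : IsPrimitive l₃)
    (a : Fin 3 → ℤ)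
    (ha : a = ![det2 l₂ l₃, det2 l₃ l₁, det2 l₁ l₂])
    (ha₁ : 0 < a 0) (ha₃ : 0 < a 2) :
    ∀ i j : Fin 3, i ≠ j → Int.gcd (a i) (a j) = Int.gcd (a 0) (Int.gcd (a 1) (a 2)) :=
  stmt_10_general l₁ l₂ l₃ h₁ h₂ h₃ a ha
end

section
/- Let V be a finite-dimensional vector space over ℚ with a symmetric bilinear form B satisfying the Hodge index condition. Let n ≥ 4 and let (A₁, …, Aₙ) be a cyclic toric family of length n in (V, B). If B(A_i, A_i) ≥ 0 for some index i, then there is at most one index j ≠ i with B(A_j, A_j) > 0, and any such j is congruent to i − 1 or i + 1 modulo n. -/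
/-- A symmetric bilinear form `B` on a ℚ-vector space `V` satisfies the Hodge index condition
if `V = C⁺ ⊕ C⁻` with `B(C⁺, C⁻) = 0`, `dim C⁺ = 1`, `B` positive definite on `C⁺` and
negative definite on `C⁻`. -/
def HodgeIndexCondition (V : Type*) [AddCommGroup V] [Module ℚ V]
    (B : V →ₗ[ℚ] V →ₗ[ℚ] ℚ) : Prop :=
  ∃ Cplus Cminus : Submodule ℚ V, IsCompl Cplus Cminus ∧
    (∀ x ∈ Cplus, ∀ y ∈ Cminus, B x y = 0) ∧
    Module.finrank ℚ Cplus = 1 ∧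
    (∀ x ∈ Cplus, x ≠ 0 → 0 < B x x) ∧
    (∀ y ∈ Cminus, y ≠ 0 → B y y < 0)

lemma key {V : Type*} [AddCommGroup V] [Module ℚ V] (B : V →ₗ[ℚ] V →ₗ[ℚ] ℚ)
    (hsymm : ∀ x y : V, B x y = B y x) (hHodge : HodgeIndexCondition V B)
    {x y : V} (hx : 0 ≤ B x x) (hy : 0 < B y y) (hxy : B x y = 0) (hx0 : x ≠ 0) : False := by
  obtain ⟨P, M, hcompl, horth, hrank, hpos, hneg⟩ := hHodge
  obtain ⟨e, he0, hgen⟩ := finrank_eq_one_iff'.mp hrank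
  -- decompose x
  have hxtop : x ∈ P ⊔ M := by rw [hcompl.sup_eq_top]; trivial
  obtain ⟨xp, hxp, xm, hxm, hxs⟩ := Submodule.mem_sup.mp hxtop
  have hytop : y ∈ P ⊔ M := by rw [hcompl.sup_eq_top]; trivial
  obtain ⟨yp, hyp, ym, hym, hys⟩ := Submodule.mem_sup.mp hytop
  obtain ⟨a, ha⟩ := hgen ⟨xp, hxp⟩
  obtain ⟨b, hb⟩ := hgen ⟨yp, hyp⟩
  have ha' : a • (e : V) = xp := congrArg Subtype.val ha
  have hb' : b • (e : V) = yp := congrArg Subtype.val hb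
  have hyx : B y x = 0 := by rw [hsymm]; exact hxy
  set z := b • x - a • y with hzdef
  have hzM : z ∈ M := by
    have : z = b • xm - a • ym := by
      rw [hzdef, ← hxs, ← hys, ← ha', ← hb']
      simp [smul_sub, smul_smul]
      module
    rw [this]
    exact Submodule.sub_mem M (Submodule.smul_mem M b hxm) (Submodule.smul_mem M a hym)
  have hBzz : B z z = b * b * B x x + a * a * B y y := by
    simp [hzdef, map_sub, map_smul, hxy, hyx]
    ring
  have hBzz0 : 0 ≤ B z z := by
    rw [hBzz]
    have h1 : 0 ≤ b * b * B x x := mul_nonneg (mul_self_nonneg b) hx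
    have h2 : 0 ≤ a * a * B y y := mul_nonneg (mul_self_nonneg a) hy.le
    linarith
  have hz0 : z = 0 := by
    by_contra h
    exact absurd (hneg z hzM h) (not_lt.mpr hBzz0)
  have hba : b • x = a • y := sub_eq_zero.mp (hzdef ▸ hz0)
  by_cases hbz : b = 0
  · -- then yp = 0 so y ∈ M, contradiction with B y y > 0
    have hyM : y ∈ M := by
      have : yp = 0 := by rw [← hb', hbz, zero_smul]
      rw [← hys, this, zero_add]; exact hym
    have hy0 : y ≠ 0 := by intro h; rw [h] at hy; simp at hy
    exact absurd (hneg y hyM hy0) (not_lt.mpr hy.le)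
  · have h1 : B (b • x) y = B (a • y) y := by rw [hba]
    have h2 : b * B x y = a * B y y := by simpa using h1
    have ha0 : a = 0 := by
      rw [hxy, mul_zero] at h2
      exact (mul_eq_zero.mp h2.symm).resolve_right (ne_of_gt hy)
    have : b • x = 0 := by rw [hba, ha0, zero_smul]
    exact hx0 (by simpa [hbz] using (smul_eq_zero.mp this))

/-- A cyclic toric family of length n: B(A_i, A_{i+1}) ≠ 0 for all i (indices mod n), and
B(A_i, A_j) = 0 whenever i, j are non-adjacent mod n. -/
def CyclicToricFamily {V : Type*} [AddCommGroup V] [Module ℚ V]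
    (B : V →ₗ[ℚ] V →ₗ[ℚ] ℚ) (n : ℕ) (A : ZMod n → V) : Prop :=
  (∀ i : ZMod n, B (A i) (A (i + 1)) ≠ 0) ∧
  (∀ i j : ZMod n, j ≠ i - 1 → j ≠ i → j ≠ i + 1 → B (A i) (A j) = 0)

/-- In a cyclic toric family of length n ≥ 4 with respect to a symmetric
bilinear form satisfying the Hodge index condition, if B(A_i, A_i) ≥ 0 for some i, then there
is at most one j ≠ i with B(A_j, A_j) > 0, and any such j is i − 1 or i + 1 (mod n). -/
theorem stmt_12 (V : Type*) [AddCommGroup V] [Module ℚ V] [FiniteDimensional ℚ V]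
    (B : V →ₗ[ℚ] V →ₗ[ℚ] ℚ) (hsymm : ∀ x y : V, B x y = B y x)
    (hHodge : HodgeIndexCondition V B)
    (n : ℕ) (hn : 4 ≤ n) (A : ZMod n → V)
    (hA : CyclicToricFamily B n A)
    (i : ZMod n) (hi : 0 ≤ B (A i) (A i)) :
    (∀ j k : ZMod n, j ≠ i → k ≠ i → 0 < B (A j) (A j) → 0 < B (A k) (A k) → j = k) ∧
    (∀ j : ZMod n, j ≠ i → 0 < B (A j) (A j) → j = i - 1 ∨ j = i + 1) := by
  haveI : NeZero n := ⟨by omega⟩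
  have hm : ∀ m : ℕ, 0 < m → m < 4 → (m : ZMod n) ≠ 0 := by
    intro m hm1 hm2 h
    rw [ZMod.natCast_eq_zero_iff] at h
    have := Nat.le_of_dvd hm1 h
    omega
  have h1 : (1 : ZMod n) ≠ 0 := by exact_mod_cast hm 1 (by norm_num) (by norm_num)
  have h2 : (2 : ZMod n) ≠ 0 := by exact_mod_cast hm 2 (by norm_num) (by norm_num)
  have h3 : (3 : ZMod n) ≠ 0 := by exact_mod_cast hm 3 (by norm_num) (by norm_num)
  have hAnz : ∀ j : ZMod n, A j ≠ 0 := by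
    intro j h
    exact hA.1 j (by rw [h]; simp)
  have part2 : ∀ j : ZMod n, j ≠ i → 0 < B (A j) (A j) → j = i - 1 ∨ j = i + 1 := by
    intro j hj hjpos
    by_contra h
    push_neg at h
    have horth : B (A i) (A j) = 0 := hA.2 i j h.1 hj h.2
    exact key B hsymm hHodge hi hjpos horth (hAnz i)
  refine ⟨?_, part2⟩
  intro j k hj hk hjp hkp
  by_contra hjk
  have hj2 := part2 j hj hjp
  have hk2 := part2 k hk hkp
  have hmain : ∀ p q : ZMod n, p = i - 1 → q = i + 1 →
      0 < B (A p) (A p) → 0 < B (A q) (A q) → False := by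
    intro p q hp hq hpp hqq
    have horth : B (A p) (A q) = 0 := by
      refine hA.2 p q ?_ ?_ ?_ <;>
      · intro hcon
        rw [hp, hq] at hcon
        first
        | exact h1 (by linear_combination hcon)
        | exact h1 (by linear_combination -hcon)
        | exact h2 (by linear_combination hcon)
        | exact h2 (by linear_combination -hcon)
        | exact h3 (by linear_combination hcon)
        | exact h3 (by linear_combination -hcon)
    exact key B hsymm hHodge hpp.le hqq horth (hAnz p)
  rcases hj2 with hj2 | hj2 <;> rcases hk2 with hk2 | hk2
  · exact hjk (hj2.trans hk2.symm)
  · exact hmain j k hj2 hk2 hjp hkp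
  · exact hmain k j hk2 hj2 hkp hjp
  · exact hjk (hj2.trans hk2.symm)
end

section
/- Let V be a finite-dimensional vector space over ℚ with a symmetric bilinear form B satisfying the Hodge index condition. Let n ≥ 4 and let (A₁, …, Aₙ) be a cyclic toric family of length n in (V, B). If there are indices i ≠ j with B(A_i, A_i) = 0, B(A_j, A_j) = 0 and B(A_i, A_j) = 0, then n = 4 and j ≡ i + 2 (mod 4). -/
section

variable {V : Type*} [AddCommGroup V] [Module ℚ V] {B : V →ₗ[ℚ] V →ₗ[ℚ] ℚ}

namespace HodgeIndexCondition

theorem exists_eq_smul_of_isotropic (hsymm : ∀ x y : V, B x y = B y x)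
    (hHodge : HodgeIndexCondition V B) {x y : V} (hy : y ≠ 0)
    (hxx : B x x = 0) (hyy : B y y = 0) (hxy : B x y = 0) :
    ∃ c : ℚ, x = c • y := by
  obtain ⟨P, M, hcompl, -, hrank, -, hneg⟩ := hHodge
  have isotropic_mem_neg : ∀ z ∈ M, B z z = 0 → z = 0 := fun z hz hzz => by
    by_contra hz0
    exact (hneg z hz hz0).ne hzz
  obtain ⟨p, m, hp, hm, rfl⟩ := Submodule.codisjoint_iff_exists_add_eq.mp hcompl.codisjoint x
  obtain ⟨q, w, hq, hw, rfl⟩ := Submodule.codisjoint_iff_exists_add_eq.mp hcompl.codisjoint y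
  have hq0 : (⟨q, hq⟩ : P) ≠ 0 := by
    intro hq0
    obtain rfl : q = 0 := congrArg Subtype.val hq0
    rw [zero_add] at hy hyy
    exact hy (isotropic_mem_neg w hw hyy)
  obtain ⟨c, hc⟩ := (finrank_eq_one_iff_of_nonzero' _ hq0).mp hrank ⟨p, hp⟩
  have hpq : c • q = p := congrArg Subtype.val hc
  refine ⟨c, sub_eq_zero.mp (isotropic_mem_neg _ ?_ ?_)⟩
  · have hdiff : p + m - c • (q + w) = m - c • w := by rw [smul_add, hpq]; abel
    rw [hdiff]
    exact M.sub_mem hm (M.smul_mem c hw)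
  · have hyx : B (q + w) (p + m) = 0 := by rw [hsymm, hxy]
    simp only [map_sub, map_smul, LinearMap.sub_apply, LinearMap.smul_apply, smul_eq_mul,
      hxx, hyy, hxy, hyx]
    ring

end HodgeIndexCondition

namespace CyclicToricFamily

variable {n : ℕ} {A : ZMod n → V}

theorem ne_zero (hA : CyclicToricFamily B n A) (i : ZMod n) : A i ≠ 0 := fun h =>
  hA.1 i (by rw [h, map_zero, LinearMap.zero_apply])

theorem adjacent_of_apply_ne_zero (hA : CyclicToricFamily B n A) {i k : ZMod n}
    (h : B (A i) (A k) ≠ 0) : k = i - 1 ∨ k = i ∨ k = i + 1 := by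
  by_contra! hk
  exact h (hA.2 i k hk.1 hk.2.1 hk.2.2)

theorem apply_sub_one_ne_zero (hA : CyclicToricFamily B n A)
    (hsymm : ∀ x y : V, B x y = B y x) (j : ZMod n) : B (A j) (A (j - 1)) ≠ 0 := by
  simpa only [hsymm (A j), sub_add_cancel] using hA.1 (j - 1)

theorem eq_sub_two_and_eq_add_two (hA : CyclicToricFamily B n A)
    (hsymm : ∀ x y : V, B x y = B y x) {i j : ZMod n} (hij : i ≠ j)
    (hii : B (A i) (A i) = 0) (hnbr : ∀ u, B (A j) u ≠ 0 → B (A i) u ≠ 0) :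
    j = i - 2 ∧ j = i + 2 := by
  have hnext := hnbr _ (hA.1 j)
  have hprev := hnbr _ (hA.apply_sub_one_ne_zero hsymm j)
  constructor
  · rcases hA.adjacent_of_apply_ne_zero hnext with h | h | h
    · linear_combination h
    · exact absurd hii (h ▸ hnext)
    · exact absurd (add_right_cancel h).symm hij
  · rcases hA.adjacent_of_apply_ne_zero hprev with h | h | h
    · exact absurd (sub_left_inj.mp h).symm hij
    · exact absurd hii (h ▸ hprev)
    · linear_combination h

end CyclicToricFamily

end

theorem stmt_13_general (V : Type*) [AddCommGroup V] [Module ℚ V]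
    (B : V →ₗ[ℚ] V →ₗ[ℚ] ℚ) (hsymm : ∀ x y : V, B x y = B y x)
    (hHodge : HodgeIndexCondition V B)
    (n : ℕ) (hn : 4 ≤ n) (A : ZMod n → V)
    (hA : CyclicToricFamily B n A)
    (i j : ZMod n) (hij : i ≠ j)
    (hii : B (A i) (A i) = 0) (hjj : B (A j) (A j) = 0) (hij0 : B (A i) (A j) = 0) :
    n = 4 ∧ j = i + 2 := by
  obtain ⟨c, hc⟩ := hHodge.exists_eq_smul_of_isotropic hsymm (hA.ne_zero i) hjj hii
    (by rw [hsymm, hij0])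
  have hnbr : ∀ u, B (A j) u ≠ 0 → B (A i) u ≠ 0 := fun u hu hiu => by
    rw [hc, map_smul, LinearMap.smul_apply, hiu, smul_zero] at hu
    exact hu rfl
  obtain ⟨hsub, hadd⟩ := hA.eq_sub_two_and_eq_add_two hsymm hij hii hnbr
  have hfour : ((4 : ℕ) : ZMod n) = 0 := by push_cast; linear_combination hsub - hadd
  have hdvd : n ∣ 4 := (ZMod.natCast_eq_zero_iff 4 n).mp hfour
  exact ⟨le_antisymm (Nat.le_of_dvd (by norm_num) hdvd) hn, hadd⟩

/-- In a cyclic toric family of length n ≥ 4 with respect to a symmetric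
bilinear form satisfying the Hodge index condition, if i ≠ j with B(A_i,A_i) = 0,
B(A_j,A_j) = 0 and B(A_i,A_j) = 0, then n = 4 and j = i + 2. -/
theorem stmt_13 (V : Type*) [AddCommGroup V] [Module ℚ V] [FiniteDimensional ℚ V]
    (B : V →ₗ[ℚ] V →ₗ[ℚ] ℚ) (hsymm : ∀ x y : V, B x y = B y x)
    (hHodge : HodgeIndexCondition V B)
    (n : ℕ) (hn : 4 ≤ n) (A : ZMod n → V)
    (hA : CyclicToricFamily B n A)
    (i j : ZMod n) (hij : i ≠ j)
    (hii : B (A i) (A i) = 0) (hjj : B (A j) (A j) = 0) (hij0 : B (A i) (A j) = 0) :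
    n = 4 ∧ j = i + 2 :=
  stmt_13_general V B hsymm hHodge n hn A hA i j hij hii hjj hij0
end

section
/- Let e₁, e₂, e₃ and d₁, d₂, d₃ be positive integers, indices read modulo 3, satisfying d_i·d_{i+1} = e_{i−1}·e_{i+1} for every i. Then d_i = e_{i+1} for every i. If moreover d_i² + e_{i−1}² + e_i² = 3·e_{i−1}·e_i·d_i for every i, then e₁² + e₂² + e₃² = 3·e₁·e₂·e₃. -/
/-- If e₁, e₂, e₃ and d₁, d₂, d₃ are positive integers (indices mod 3) with
d_i·d_{i+1} = e_{i−1}·e_{i+1} for every i, then d_i = e_{i+1} for every i; and if moreover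
d_i² + e_{i−1}² + e_i² = 3·e_{i−1}·e_i·d_i for every i, then the e_i satisfy the Markov
equation e₁² + e₂² + e₃² = 3·e₁·e₂·e₃. -/
theorem stmt_18 (e d : ZMod 3 → ℤ)
    (he : ∀ i, 0 < e i) (hd : ∀ i, 0 < d i)
    (hmul : ∀ i : ZMod 3, d i * d (i + 1) = e (i - 1) * e (i + 1)) :
    (∀ i : ZMod 3, d i = e (i + 1)) ∧
    ((∀ i : ZMod 3, (d i) ^ 2 + (e (i - 1)) ^ 2 + (e i) ^ 2 = 3 * e (i - 1) * e i * d i) →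
      (e 0) ^ 2 + (e 1) ^ 2 + (e 2) ^ 2 = 3 * e 0 * e 1 * e 2) := by
  have h0 := hmul 0
  have h1 := hmul 1
  have h2 := hmul 2
  rw [show ((0:ZMod 3) - 1) = 2 by decide, show ((0:ZMod 3) + 1) = 1 by decide] at h0
  rw [show ((1:ZMod 3) - 1) = 0 by decide, show ((1:ZMod 3) + 1) = 2 by decide] at h1
  rw [show ((2:ZMod 3) - 1) = 1 by decide, show ((2:ZMod 3) + 1) = 0 by decide] at h2
  have e0 := he 0; have e1 := he 1; have e2 := he 2
  have d0 := hd 0; have d1 := hd 1; have d2 := hd 2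
  have hsq : (d 0 * d 1 * d 2) ^ 2 = (e 0 * e 1 * e 2) ^ 2 := by
    calc (d 0 * d 1 * d 2) ^ 2 = (d 0 * d 1) * (d 1 * d 2) * (d 2 * d 0) := by ring
      _ = (e 2 * e 1) * (e 0 * e 2) * (e 1 * e 0) := by rw [h0, h1, h2]
      _ = (e 0 * e 1 * e 2) ^ 2 := by ring
  have hprod : d 0 * d 1 * d 2 = e 0 * e 1 * e 2 := by
    nlinarith [hsq, mul_pos (mul_pos d0 d1) d2, mul_pos (mul_pos e0 e1) e2]
  have key : ∀ i : ZMod 3, d i = e (i + 1) := by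
    intro i
    fin_cases i
    · show d 0 = e (0 + 1)
      rw [show ((0:ZMod 3) + 1) = 1 by decide]
      nlinarith [mul_pos e0 e2]
    · show d 1 = e (1 + 1)
      rw [show ((1:ZMod 3) + 1) = 2 by decide]
      nlinarith [mul_pos e0 e1]
    · show d 2 = e (2 + 1)
      rw [show ((2:ZMod 3) + 1) = 0 by decide]
      nlinarith [mul_pos e1 e2]
  refine ⟨key, fun hRR => ?_⟩
  have hr := hRR 0
  rw [show ((0:ZMod 3) - 1) = 2 by decide] at hr
  have k0 := key 0
  rw [show ((0:ZMod 3) + 1) = 1 by decide] at k0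
  nlinarith [hr, k0]
end
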